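/- arXiv:1511.02176 — 4 statements merged into one kernel-verified Lean document; each statement's English description precedes it below -/
import Mathlib

section
/- For every real number x ≥ 0, the Mill's ratio of the standard Gaussian satisfies exp(x²/2)·∫ₓ^∞ exp(−t²/2) dt ≥ π/((π−1)·x + √(x² + 2π)) ≥ π/(π·x + √(2π)). -/
/-!
Let `s = √(x² + 2π)`, `D = (π - 1) x + s` and `Q x = ∫ₓ^∞ exp(-t²/2) dt - (π / D) exp(-x²/2)`.
Then `Q 0 = √(2π)/2 - π/√(2π) = 0` and `Q x → 0` as `x → ∞`, while
`Q' x = π exp(-x²/2) (s - x) ((π - 3) s - x) / (D² s (s + x))` changes sign exactly once on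
`[0, ∞)`, from `+` to `-`. So `Q` increases from `0` and then decreases towards `0`, hence `Q ≥ 0`.
The second inequality is `√(x² + 2π) ≤ x + √(2π)`.
-/

open Real MeasureTheory Set Filter Topology

theorem le_of_deriv_nonneg_nonpos_of_tendsto_atTop {f f' : ℝ → ℝ} {a b m : ℝ}
    (hc : ContinuousOn f (Ici b)) (hf : ∀ x ∈ Ioi b, HasDerivAt f (f' x) x)
    (hinc : ∀ x ∈ Ioo b a, 0 ≤ f' x) (hdec : ∀ x ∈ Ioi a, f' x ≤ 0)
    (hb : m ≤ f b) (hlim : Tendsto f atTop (𝓝 m)) {x : ℝ} (hx : b ≤ x) : m ≤ f x := by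
  rcases le_or_gt x a with hxa | hax
  · have hmono : MonotoneOn f (Icc b x) := by
      refine monotoneOn_of_hasDerivWithinAt_nonneg (f' := f') (convex_Icc b x)
        (hc.mono Icc_subset_Ici_self) (fun y hy => ?_) (fun y hy => ?_) <;>
        rw [interior_Icc] at hy
      · exact (hf y hy.1).hasDerivWithinAt
      · exact hinc y ⟨hy.1, hy.2.trans_le hxa⟩
    exact hb.trans (hmono (left_mem_Icc.2 hx) (right_mem_Icc.2 hx) hx)
  · have hanti : AntitoneOn f (Ici x) := by
      refine antitoneOn_of_hasDerivWithinAt_nonpos (f' := f') (convex_Ici x)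
        (hc.mono (Ici_subset_Ici.2 hx)) (fun y hy => ?_) (fun y hy => ?_) <;>
        rw [interior_Ici] at hy
      · exact (hf y (hx.trans_lt hy)).hasDerivWithinAt
      · exact hdec y (hax.trans hy)
    exact le_of_tendsto hlim
      (eventually_atTop.2 ⟨x, fun y hy => hanti self_mem_Ici hy hy⟩)

theorem hasDerivAt_integral_Ioi {f : ℝ → ℝ} (hi : Integrable f) (hc : Continuous f) (x : ℝ) :
    HasDerivAt (fun y => ∫ t in Ioi y, f t) (-f x) x := by
  have htail : (fun y => ∫ t in Ioi y, f t) = fun y => (∫ t in Ioi x, f t) - ∫ t in x..y, f t :=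
    funext fun y => by
      rw [← intervalIntegral.integral_Ioi_sub_Ioi' hi.integrableOn hi.integrableOn, sub_sub_cancel]
  rw [htail, ← zero_sub]
  exact (hasDerivAt_const x _).sub (intervalIntegral.integral_hasDerivAt_right
    hi.intervalIntegrable (hc.stronglyMeasurableAtFilter _ _) hc.continuousAt)

theorem integrable_exp_neg_sq_div_two : Integrable fun t : ℝ => exp (-t ^ 2 / 2) := by
  simpa only [neg_mul, one_div, inv_mul_eq_div, neg_div]
    using integrable_exp_neg_mul_sq (b := 1 / 2) one_half_pos

theorem integral_Ioi_zero_exp_neg_sq_div_two :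
    ∫ t in Ioi (0 : ℝ), exp (-t ^ 2 / 2) = √(2 * π) / 2 := by
  simpa only [neg_mul, one_div, inv_mul_eq_div, div_inv_eq_mul, mul_comm π, neg_div]
    using integral_gaussian_Ioi (1 / 2)

theorem tendsto_exp_neg_sq_div_two_atTop :
    Tendsto (fun t : ℝ => exp (-t ^ 2 / 2)) atTop (𝓝 0) := by
  refine tendsto_exp_atBot.comp ?_
  simpa only [neg_div, Function.comp_def] using tendsto_neg_atTop_atBot.comp
    ((tendsto_pow_atTop two_ne_zero).atTop_div_const (two_pos (α := ℝ)))

theorem sqrt_sq_add_le_add_sqrt {x y : ℝ} (hx : 0 ≤ x) (hy : 0 ≤ y) : √(x ^ 2 + y) ≤ x + √y :=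
  sqrt_le_iff.2 ⟨by positivity, by nlinarith [sq_sqrt hy, sqrt_nonneg y]⟩

noncomputable def boydDenom (x : ℝ) : ℝ := (π - 1) * x + √(x ^ 2 + 2 * π)

noncomputable def boydGap (x : ℝ) : ℝ :=
  (∫ t in Ioi x, exp (-t ^ 2 / 2)) - π / boydDenom x * exp (-x ^ 2 / 2)

noncomputable def boydCrossover : ℝ := (π - 3) * √(2 * π / (1 - (π - 3) ^ 2))

section Boyd

variable {x : ℝ}

theorem lt_sqrt_sq_add_two_pi (x : ℝ) : x < √(x ^ 2 + 2 * π) :=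
  lt_sqrt_of_sq_lt (by linarith [pi_pos])

theorem boydDenom_pos (hx : 0 ≤ x) : 0 < boydDenom x := by
  have : 0 < π - 1 := by linarith [pi_gt_three]
  unfold boydDenom
  positivity

theorem hasDerivAt_boydDenom (x : ℝ) :
    HasDerivAt boydDenom ((π - 1) + x / √(x ^ 2 + 2 * π)) x := by
  have hsq : HasDerivAt (fun y : ℝ => y ^ 2 + 2 * π) (2 * x) x := by
    simpa using (hasDerivAt_pow 2 x).add_const (2 * π)
  have := ((hasDerivAt_id' x).const_mul (π - 1)).add (hsq.sqrt (by positivity))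
  rwa [mul_one, mul_div_mul_left _ _ two_ne_zero] at this

theorem hasDerivAt_boydGap (hx : 0 ≤ x) :
    HasDerivAt boydGap
      (π * exp (-x ^ 2 / 2) * (√(x ^ 2 + 2 * π) - x) * ((π - 3) * √(x ^ 2 + 2 * π) - x) /
        (boydDenom x ^ 2 * √(x ^ 2 + 2 * π) * (√(x ^ 2 + 2 * π) + x))) x := by
  have hD := boydDenom_pos hx
  have hs2 : √(x ^ 2 + 2 * π) ^ 2 = x ^ 2 + 2 * π := sq_sqrt (by positivity)
  have hg := (hasDerivAt_const x π).div (hasDerivAt_boydDenom x) hD.ne'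
  have he : HasDerivAt (fun t : ℝ => exp (-t ^ 2 / 2)) (exp (-x ^ 2 / 2) * (-x)) x :=
    ((hasDerivAt_pow 2 x).neg.div_const 2).exp.congr_deriv (by norm_num; ring)
  refine ((hasDerivAt_integral_Ioi integrable_exp_neg_sq_div_two (by fun_prop) x).sub
    (hg.mul he)).congr_deriv ?_
  have hs : 0 < √(x ^ 2 + 2 * π) := by positivity
  simp only [Pi.div_apply, boydDenom] at hD ⊢
  generalize √(x ^ 2 + 2 * π) = s at *
  have hD' : x * (π - 1) + s ≠ 0 := by linarith
  field_simp
  linear_combination (-s ^ 2 + x * s - π * x * s) * hs2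

theorem le_pi_sub_three_mul_sqrt_iff (hx : 0 ≤ x) :
    x ≤ (π - 3) * √(x ^ 2 + 2 * π) ↔ x ≤ boydCrossover := by
  have hc : 0 < π - 3 := by linarith [pi_gt_three]
  have hc1 : 0 < 1 - (π - 3) ^ 2 := by nlinarith [pi_lt_four]
  rw [boydCrossover, ← sq_le_sq₀ hx (by positivity), ← sq_le_sq₀ hx (by positivity), mul_pow,
    mul_pow, sq_sqrt (by positivity), sq_sqrt (by positivity), ← mul_div_assoc, le_div_iff₀ hc1]
  constructor <;> intro h <;> linarith

theorem boydGap_zero : boydGap 0 = 0 := by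
  have hs2 : √(2 * π) ^ 2 = 2 * π := sq_sqrt (by positivity)
  have hs : 0 < √(2 * π) := by positivity
  simp only [boydGap, boydDenom, integral_Ioi_zero_exp_neg_sq_div_two, mul_zero, zero_add,
    ne_eq, OfNat.ofNat_ne_zero, not_false_eq_true, zero_pow, neg_zero, zero_div, exp_zero, mul_one]
  rw [sub_eq_zero, eq_div_iff hs.ne']
  linear_combination hs2 / 2

theorem tendsto_boydGap_atTop : Tendsto boydGap atTop (𝓝 0) := by
  have hD : Tendsto boydDenom atTop atTop := by
    have : (0 : ℝ) < π - 1 := by linarith [pi_gt_three]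
    refine tendsto_atTop_mono' atTop ?_ (tendsto_id.const_mul_atTop this)
    filter_upwards with y
    simp only [boydDenom, id, le_add_iff_nonneg_right, sqrt_nonneg]
  have h : Tendsto boydGap atTop (𝓝 (0 - 0 * 0)) := (tendsto_integral_Ioi_zero tendsto_id).sub
    ((tendsto_const_nhds.div_atTop hD).mul tendsto_exp_neg_sq_div_two_atTop)
  rwa [mul_zero, sub_zero] at h

theorem boydGap_nonneg (hx : 0 ≤ x) : 0 ≤ boydGap x := by
  refine le_of_deriv_nonneg_nonpos_of_tendsto_atTop (a := boydCrossover)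
    (fun y hy => (hasDerivAt_boydGap hy).continuousAt.continuousWithinAt)
    (fun y hy => hasDerivAt_boydGap (le_of_lt hy)) (fun y hy => ?_) (fun y hy => ?_)
    boydGap_zero.ge tendsto_boydGap_atTop hx
  · obtain ⟨hy0, hya⟩ := hy
    have hc := (le_pi_sub_three_mul_sqrt_iff hy0.le).2 hya.le
    have hsy := lt_sqrt_sq_add_two_pi y
    exact div_nonneg (mul_nonneg (mul_nonneg (by positivity) (sub_nonneg.2 hsy.le))
      (sub_nonneg.2 hc)) (by positivity)
  · have hy0 : 0 ≤ y := (mul_nonneg (by linarith [pi_gt_three]) (sqrt_nonneg _)).trans hy.le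
    have hc := not_le.1 (mt (le_pi_sub_three_mul_sqrt_iff hy0).1 (not_le.2 hy))
    have hsy := lt_sqrt_sq_add_two_pi y
    exact div_nonpos_of_nonpos_of_nonneg (mul_nonpos_of_nonneg_of_nonpos
      (mul_nonneg (by positivity) (sub_nonneg.2 hsy.le)) (sub_nonpos.2 hc.le)) (by positivity)

end Boyd

/-- Mill's ratio lower bound for the standard Gaussian (Boyd's bound and its
simplification): for `x ≥ 0`,
`exp(x²/2) ∫ₓ^∞ exp(−t²/2) dt ≥ π/((π−1)x + √(x²+2π)) ≥ π/(πx + √(2π))`. -/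
theorem mills_ratio_lower_bound (x : ℝ) (hx : 0 ≤ x) :
    Real.exp (x ^ 2 / 2) * (∫ t in Set.Ioi x, Real.exp (-t ^ 2 / 2)) ≥
      π / ((π - 1) * x + Real.sqrt (x ^ 2 + 2 * π)) ∧
    π / ((π - 1) * x + Real.sqrt (x ^ 2 + 2 * π)) ≥
      π / (π * x + Real.sqrt (2 * π)) := by
  refine ⟨?_, div_le_div_of_nonneg_left pi_pos.le (boydDenom_pos hx) ?_⟩
  · have hgap := boydGap_nonneg hx
    rw [boydGap, sub_nonneg] at hgap
    calc π / boydDenom x = exp (x ^ 2 / 2) * (π / boydDenom x * exp (-x ^ 2 / 2)) := by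
          rw [mul_left_comm, ← exp_add, neg_div, add_neg_cancel, exp_zero, mul_one]
      _ ≤ _ := by gcongr
  · linarith [sqrt_sq_add_le_add_sqrt hx (by positivity : (0 : ℝ) ≤ 2 * π)]
end

section
/- Let X₁, X₂, …, X_d be independent Gaussian random variables, each with distribution N(0, σ²) where σ > 0. For any integer d ≥ 2, E[max_{1 ≤ i ≤ d} X_i] ≥ 0.13·σ·√(ln d) − 0.7·σ. -/
/-!
Let `M = maxᵢ Xᵢ` and `r = √(log d)`. Since `M ≥ X₁`, for every `t` we have pointwise
`M ≥ t · 1{M ≥ t} - X₁⁻`, and `E[X₁⁻] = E|X₁| / 2 ≤ σ / 2`, so `E[M] ≥ t · P(M ≥ t) - σ / 2`.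
By independence `P(M < t) = (1 - q)ᵈ ≤ exp (-d q)` with `q = P(X₁ ≥ t)`. Bounding the Gaussian
density from below on `[t, t + σ]` shows `d q ≥ log 2` for `t = 0.26 r σ` as soon as
`r ≥ 20 / 13`; then `P(M ≥ t) ≥ 1 / 2` and `E[M] ≥ 0.13 σ r - σ / 2`. For smaller `r`, the
choice `t = 0` already gives `E[M] ≥ -σ / 2`.
-/

open MeasureTheory ProbabilityTheory Real Set

open scoped NNReal

lemma ciSup_lt_iff_of_finite {ι α : Type*} [Finite ι] [Nonempty ι]
    [ConditionallyCompleteLinearOrder α] {f : ι → α} {t : α} :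
    ⨆ i, f i < t ↔ ∀ i, f i < t := by
  refine ⟨fun h i ↦ (le_ciSup (Finite.bddAbove_range f) i).trans_lt h, fun h ↦ ?_⟩
  obtain ⟨i, hi⟩ := exists_eq_ciSup_of_finite (f := f)
  exact hi ▸ h i

section Maximum

variable {ι Ω : Type*} [MeasurableSpace Ω] {μ : Measure Ω}

lemma integrable_iSup [Finite ι] {X : ι → Ω → ℝ} (hX : ∀ i, Integrable (X i) μ) :
    Integrable (fun ω ↦ ⨆ i, X i ω) μ := by
  have := Fintype.ofFinite ι
  rcases isEmpty_or_nonempty ι with _ | _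
  · simp [iSup_of_empty']
  have hsup : (fun ω ↦ ⨆ i, X i ω) = Finset.univ.sup' Finset.univ_nonempty X := by
    ext ω
    rw [Finset.sup'_apply, Finset.sup'_univ_eq_ciSup]
  rw [hsup]
  exact Finset.sup'_induction (p := fun f ↦ Integrable f μ) _ _
    (fun _ hf _ hg ↦ Integrable.sup hf hg) fun i _ ↦ hX i

lemma ProbabilityTheory.iIndepFun.measureReal_iSup_lt [Fintype ι] [Nonempty ι]
    [IsProbabilityMeasure μ] {X : ι → Ω → ℝ} {ν : Measure ℝ} (hindep : iIndepFun X μ)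
    (hX : ∀ i, Measurable (X i)) (hlaw : ∀ i, μ.map (X i) = ν) (t : ℝ) :
    μ.real {ω | ⨆ i, X i ω < t} = ν.real (Iio t) ^ Fintype.card ι := by
  have hset : {ω | ⨆ i, X i ω < t} = ⋂ i, X i ⁻¹' Iio t := by
    ext ω
    simp [ciSup_lt_iff_of_finite]
  have hmarginal : ∀ i, μ.real (X i ⁻¹' Iio t) = ν.real (Iio t) := fun i ↦ by
    rw [← hlaw i, map_measureReal_apply (hX i) measurableSet_Iio]
  rw [hset, measureReal_def, hindep.meas_iInter fun i ↦ ⟨Iio t, measurableSet_Iio, rfl⟩,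
    ENNReal.toReal_prod]
  simp only [← measureReal_def, hmarginal, Finset.prod_const, Finset.card_univ]

lemma ProbabilityTheory.iIndepFun.one_sub_exp_le_measureReal_le_iSup [Fintype ι] [Nonempty ι]
    [IsProbabilityMeasure μ] {X : ι → Ω → ℝ} {ν : Measure ℝ} [IsProbabilityMeasure ν]
    (hindep : iIndepFun X μ) (hX : ∀ i, Measurable (X i)) (hlaw : ∀ i, μ.map (X i) = ν)
    (t : ℝ) :
    1 - exp (-(Fintype.card ι * ν.real (Ici t))) ≤ μ.real {ω | t ≤ ⨆ i, X i ω} := by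
  have hcompl : {ω | t ≤ ⨆ i, X i ω} = {ω | ⨆ i, X i ω < t}ᶜ := by
    ext ω
    simp
  have hmeas : MeasurableSet {ω | ⨆ i, X i ω < t} :=
    measurableSet_lt (Measurable.iSup hX) measurable_const
  rw [hcompl, probReal_compl_eq_one_sub hmeas, hindep.measureReal_iSup_lt hX hlaw,
    ← compl_Ici, probReal_compl_eq_one_sub measurableSet_Ici, ← mul_neg, exp_nat_mul]
  gcongr
  · exact sub_nonneg.2 measureReal_le_one
  · exact one_sub_le_exp_neg _

end Maximum

section Expectation

variable {Ω : Type*} [MeasurableSpace Ω] {μ : Measure Ω}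

lemma mul_measureReal_le_integral_add_integral_negPart [IsFiniteMeasure μ] {M Y : Ω → ℝ}
    (hM : Measurable M) (hMint : Integrable M μ) (hY : Integrable Y μ)
    (hYM : ∀ ω, Y ω ≤ M ω) (t : ℝ) :
    t * μ.real {ω | t ≤ M ω} ≤ ∫ ω, M ω ∂μ + ∫ ω, (Y ω)⁻ ∂μ := by
  have hmeas : MeasurableSet {ω | t ≤ M ω} := measurableSet_le measurable_const hM
  have hpointwise : ∀ ω, {ω | t ≤ M ω}.indicator (fun _ ↦ t) ω ≤ M ω + (Y ω)⁻ := fun ω ↦ by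
    by_cases h : t ≤ M ω
    · rw [indicator_of_mem (s := {ω | t ≤ M ω}) h]
      linarith [negPart_nonneg (Y ω)]
    · rw [indicator_of_notMem (s := {ω | t ≤ M ω}) h]
      linarith [hYM ω, neg_le_negPart (Y ω)]
  calc t * μ.real {ω | t ≤ M ω} = ∫ ω, {ω | t ≤ M ω}.indicator (fun _ ↦ t) ω ∂μ := by
        rw [integral_indicator_const t hmeas, smul_eq_mul, mul_comm]
    _ ≤ ∫ ω, M ω + (Y ω)⁻ ∂μ :=
        integral_mono ((integrable_const t).indicator hmeas) (hMint.add hY.neg_part) hpointwise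
    _ = ∫ ω, M ω ∂μ + ∫ ω, (Y ω)⁻ ∂μ := integral_add hMint hY.neg_part

lemma integral_negPart_le_of_variance_le [IsProbabilityMeasure μ] {Y : Ω → ℝ} {σ : ℝ}
    (hY : MemLp Y 2 μ) (hmean : μ[Y] = 0) (hσ : 0 < σ) (hvar : Var[Y; μ] ≤ σ ^ 2) :
    ∫ ω, (Y ω)⁻ ∂μ ≤ σ / 2 := by
  -- `y⁻ = (|y| - y) / 2` and `|y| ≤ (y ^ 2 / σ + σ) / 2`
  have hpointwise : ∀ y : ℝ, y⁻ ≤ (y ^ 2 / σ + σ) / 4 - y / 2 := fun y ↦ by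
    rcases le_total 0 y with hy | hy
    · have : (y ^ 2 / σ + σ) / 4 - y / 2 = (y - σ) ^ 2 / (4 * σ) := by field_simp; ring
      rw [negPart_eq_zero.2 hy, this]
      positivity
    · have : (y ^ 2 / σ + σ) / 4 - y / 2 = (y + σ) ^ 2 / (4 * σ) - y := by field_simp; ring
      rw [negPart_eq_neg.2 hy, this, le_sub_iff_add_le, neg_add_cancel]
      positivity
  have hsq : ∫ ω, Y ω ^ 2 ∂μ ≤ σ ^ 2 := by
    simpa [variance_eq_integral hY.aemeasurable, hmean] using hvar
  have hint := hY.integrable one_le_two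
  have hint_sq : Integrable (fun ω ↦ (Y ω ^ 2 / σ + σ) / 4) μ :=
    ((hY.integrable_sq.div_const σ).add (integrable_const σ)).div_const 4
  calc ∫ ω, (Y ω)⁻ ∂μ ≤ ∫ ω, (Y ω ^ 2 / σ + σ) / 4 - Y ω / 2 ∂μ :=
        integral_mono hint.neg_part (hint_sq.sub (hint.div_const 2)) fun ω ↦ hpointwise (Y ω)
    _ = ((∫ ω, Y ω ^ 2 ∂μ) / σ + σ) / 4 := by
        rw [integral_sub hint_sq (hint.div_const 2), integral_div, integral_div,
          integral_add (hY.integrable_sq.div_const σ) (integrable_const σ), integral_div,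
          integral_const, hmean]
        simp
    _ ≤ (σ ^ 2 / σ + σ) / 4 := by gcongr
    _ = σ / 2 := by field_simp; ring

end Expectation

section Gaussian

lemma gaussianPDFReal_antitoneOn (m : ℝ) (v : ℝ≥0) :
    AntitoneOn (gaussianPDFReal m v) (Ici m) := by
  intro x hx y _ hxy
  simp only [gaussianPDFReal_def]
  gcongr
  exact sub_nonneg.2 hx

lemma mul_gaussianPDFReal_le_gaussianReal_Ici {m t h : ℝ} {v : ℝ≥0} (hv : v ≠ 0) (hmt : m ≤ t)
    (hh : 0 ≤ h) : h * gaussianPDFReal m v (t + h) ≤ (gaussianReal m v).real (Ici t) := by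
  have hint := (integrable_gaussianPDFReal m v).integrableOn (s := Icc t (t + h))
  calc h * gaussianPDFReal m v (t + h) = ∫ _ in Icc t (t + h), gaussianPDFReal m v (t + h) := by
        simp [hh]
    _ ≤ ∫ x in Icc t (t + h), gaussianPDFReal m v x :=
        setIntegral_mono_on (integrableOn_const measure_Icc_lt_top.ne) hint measurableSet_Icc
          fun x hx ↦ gaussianPDFReal_antitoneOn m v (hmt.trans hx.1)
            (hmt.trans (hx.1.trans hx.2)) hx.2
    _ ≤ ∫ x in Ici t, gaussianPDFReal m v x :=
        setIntegral_mono_set (integrable_gaussianPDFReal m v).integrableOn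
          (ae_of_all _ (gaussianPDFReal_nonneg m v)) Icc_subset_Ici_self.eventuallyLE
    _ = (gaussianReal m v).real (Ici t) := by
        rw [measureReal_def, gaussianReal_apply_eq_integral m hv, ENNReal.toReal_ofReal
          (setIntegral_nonneg measurableSet_Ici fun x _ ↦ gaussianPDFReal_nonneg m v x)]

lemma mul_gaussianPDFReal_mul {σ : ℝ} {v : ℝ≥0} (hσ : 0 < σ) (hv : (v : ℝ) = σ ^ 2) (c : ℝ) :
    σ * gaussianPDFReal 0 v (c * σ) = gaussianPDFReal 0 1 c := by
  simp only [gaussianPDFReal, hv, NNReal.coe_one, sub_zero, mul_one]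
  rw [sqrt_mul (by positivity), sqrt_sq hσ.le]
  field_simp

lemma log_two_le_exp_sq_mul_gaussianPDFReal {r : ℝ} (hr : 20 / 13 ≤ r) :
    log 2 ≤ exp (r ^ 2) * gaussianPDFReal 0 1 (0.26 * r + 1) := by
  have hexponent : 1 ≤ r ^ 2 - (0.26 * r + 1) ^ 2 / 2 := by nlinarith
  have hsqrt : √(2 * π) ≤ 2.6 := by
    rw [sqrt_le_left (by norm_num)]
    linarith [pi_lt_d2]
  calc log 2 ≤ exp 1 / 2.6 := by
        rw [le_div_iff₀ (by norm_num)]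
        linarith [log_two_lt_d9, exp_one_gt_d9]
    _ ≤ exp (r ^ 2 - (0.26 * r + 1) ^ 2 / 2) / √(2 * π) := by gcongr
    _ = exp (r ^ 2) * gaussianPDFReal 0 1 (0.26 * r + 1) := by
        rw [gaussianPDFReal_def, sub_eq_add_neg, exp_add]
        simp only [NNReal.coe_one, mul_one, sub_zero]
        ring_nf

end Gaussian

section MaximumOfGaussians

variable {ι Ω : Type*} [MeasurableSpace Ω] {μ : Measure Ω} [IsProbabilityMeasure μ]
  {X : ι → Ω → ℝ} {σ : ℝ} {v : ℝ≥0}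

lemma mul_measureReal_le_iSup_le_integral_iSup_add [Finite ι] [Nonempty ι]
    (hX : ∀ i, Measurable (X i)) (hlaw : ∀ i, μ.map (X i) = gaussianReal 0 v) (hσ : 0 < σ)
    (hv : (v : ℝ) = σ ^ 2) (t : ℝ) :
    t * μ.real {ω | t ≤ ⨆ i, X i ω} ≤ ∫ ω, ⨆ i, X i ω ∂μ + σ / 2 := by
  obtain ⟨i₀⟩ := ‹Nonempty ι›
  have hL2 : ∀ i, MemLp (X i) 2 μ := fun i ↦
    (memLp_map_measure_iff aestronglyMeasurable_id (hX i).aemeasurable).1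
      (hlaw i ▸ memLp_id_gaussianReal 2)
  have hlaw₀ : HasLaw (X i₀) (gaussianReal 0 v) μ := ⟨(hX i₀).aemeasurable, hlaw i₀⟩
  have hneg : ∫ ω, (X i₀ ω)⁻ ∂μ ≤ σ / 2 :=
    integral_negPart_le_of_variance_le (hL2 i₀)
      (by rw [hlaw₀.integral_eq, integral_id_gaussianReal]) hσ
      (by rw [hlaw₀.variance_eq, variance_id_gaussianReal, hv])
  have := mul_measureReal_le_integral_add_integral_negPart (Measurable.iSup hX)
    (integrable_iSup fun i ↦ (hL2 i).integrable one_le_two) ((hL2 i₀).integrable one_le_two)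
    (fun ω ↦ le_ciSup (f := fun i ↦ X i ω) (Finite.bddAbove_range _) i₀) t
  linarith

lemma one_half_le_measureReal_le_iSup [Fintype ι] [Nonempty ι] (hindep : iIndepFun X μ)
    (hX : ∀ i, Measurable (X i)) (hlaw : ∀ i, μ.map (X i) = gaussianReal 0 v) (hσ : 0 < σ)
    (hv : (v : ℝ) = σ ^ 2) {r : ℝ} (hr : 20 / 13 ≤ r) (hcard : exp (r ^ 2) ≤ Fintype.card ι) :
    1 / 2 ≤ μ.real {ω | 0.26 * r * σ ≤ ⨆ i, X i ω} := by
  have htail : gaussianPDFReal 0 1 (0.26 * r + 1) ≤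
      (gaussianReal 0 v).real (Ici (0.26 * r * σ)) := by
    rw [← mul_gaussianPDFReal_mul hσ hv, add_mul, one_mul]
    refine mul_gaussianPDFReal_le_gaussianReal_Ici ?_ (by positivity) hσ.le
    rw [← NNReal.coe_ne_zero, hv]
    positivity
  have hlog_two : log 2 ≤ Fintype.card ι * (gaussianReal 0 v).real (Ici (0.26 * r * σ)) :=
    (log_two_le_exp_sq_mul_gaussianPDFReal hr).trans
      (mul_le_mul hcard htail (gaussianPDFReal_nonneg _ _ _) (Nat.cast_nonneg _))
  calc (1 : ℝ) / 2 = 1 - exp (-log 2) := by rw [exp_neg, exp_log two_pos]; norm_num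
    _ ≤ 1 - exp (-(Fintype.card ι * (gaussianReal 0 v).real (Ici (0.26 * r * σ)))) := by
        gcongr
    _ ≤ μ.real {ω | 0.26 * r * σ ≤ ⨆ i, X i ω} :=
        hindep.one_sub_exp_le_measureReal_le_iSup hX hlaw _

end MaximumOfGaussians

/-- Lower bound on the expected maximum of `d ≥ 2` independent `N(0, σ²)`
Gaussian random variables: `E[max_i X_i] ≥ 0.13·σ·√(ln d) − 0.7·σ`. -/
theorem expected_max_gaussians_lower_bound' {Ω : Type*} [MeasurableSpace Ω]
    (μ : Measure Ω) [IsProbabilityMeasure μ]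
    (σ : ℝ) (hσ : 0 < σ) (d : ℕ) (hd : 2 ≤ d)
    (X : Fin d → Ω → ℝ) (hX : ∀ i, Measurable (X i))
    (hlaw : ∀ i, μ.map (X i) = gaussianReal 0 ⟨σ ^ 2, sq_nonneg σ⟩)
    (hindep : iIndepFun X μ) :
    (∫ ω, ⨆ i, X i ω ∂μ) ≥ 0.13 * σ * Real.sqrt (Real.log d) - 0.7 * σ := by
  -- `⟨σ ^ 2, _⟩` elaborates as a bare subtype element, on which `ℝ≥0` lemmas fail to rewrite
  obtain ⟨v, hv, hlaw⟩ : ∃ v : ℝ≥0, (v : ℝ) = σ ^ 2 ∧ ∀ i, μ.map (X i) = gaussianReal 0 v :=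
    ⟨_, rfl, hlaw⟩
  have : Nonempty (Fin d) := ⟨⟨0, by omega⟩⟩
  have hmax := mul_measureReal_le_iSup_le_integral_iSup_add hX hlaw hσ hv
  set r := √(log d)
  have hr : 0 ≤ r := sqrt_nonneg _
  rcases le_or_gt r (20 / 13) with hsmall | hlarge
  · nlinarith [hmax 0]
  have hcard : exp (r ^ 2) ≤ Fintype.card (Fin d) := by
    rw [Fintype.card_fin, sq_sqrt (log_nonneg (by norm_cast; omega)),
      exp_log (by norm_cast; omega)]
  have hhalf := one_half_le_measureReal_le_iSup hindep hX hlaw hσ hv hlarge.le hcard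
  nlinarith [hmax (0.26 * r * σ),
    mul_le_mul_of_nonneg_left hhalf (by positivity : 0 ≤ 0.26 * r * σ)]
end

section
/- For all integers n, k with 1 ≤ k ≤ n−1, the binomial coefficient satisfies C(n, k) > (1/(exp(1/6)·√(2π))) · 2ⁿ · exp(−n·D(k/n ‖ 1/2)) · √(n/(k·(n−k))). -/
open Real

/-- Kullback–Leibler divergence between `Bernoulli(p)` and `Bernoulli(q)`
(with the convention `0 · ln 0 = 0`, since `Real.log 0 = 0`, this agrees with
the extension by continuity to `p ∈ {0,1}`). -/
noncomputable def bernKL (p q : ℝ) : ℝ :=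
  p * Real.log (p / q) + (1 - p) * Real.log ((1 - p) / (1 - q))

/-!
Stirling's formula with Robbins' error term, `√(2πm) (m/e)^m < m! ≤ √(2πm) (m/e)^m e^{1/(12m)}`
for `m ≥ 1` (the lower bound is strict because the Stirling sequence decreases strictly to `√π`),
applied to `C(k + b, k) = (k + b)! / (k! b!)`, bounds the binomial coefficient below by
`e^{-1/(12k) - 1/(12b)} / √(2π) · (k + b)^(k + b) / (k^k b^b) · √((k + b) / (k b))`.
The exponential factor is at least `e^{-1/6}`, and `(k + b)^(k + b) / (k^k b^b)` is exactly
`2^n e^{-n D(k/n ‖ 1/2)}` for `n = k + b`.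
-/

open scoped Nat

namespace Stirling

theorem stirlingSeq'_strictAnti : StrictAnti (stirlingSeq ∘ Nat.succ) :=
  strictAnti_nat_of_succ_lt fun n ↦ by
    have hpos : 0 < log (stirlingSeq (n + 1)) - log (stirlingSeq (n + 2)) :=
      hasSum_lt (f := 0) (i := 0) (fun _ ↦ by positivity) (by positivity) hasSum_zero
        (log_stirlingSeq_sdiff_hasSum n)
    rwa [sub_pos, log_lt_log_iff (stirlingSeq'_pos _) (stirlingSeq'_pos _)] at hpos

theorem sqrt_pi_lt_stirlingSeq {n : ℕ} (hn : n ≠ 0) : √π < stirlingSeq n := by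
  obtain ⟨m, rfl⟩ : ∃ m, n = m + 1 := ⟨n - 1, by omega⟩
  exact (sqrt_pi_le_stirlingSeq (by omega)).trans_lt (stirlingSeq'_strictAnti m.lt_succ_self)

/-- Robbins' step bound `1 / (12 m (m + 1)) = 1 / (12 m) - 1 / (12 (m + 1))` telescopes: the sequence
`log (stirlingSeq m) - 1 / (12 m)` increases to `log √π`. -/
theorem stirlingSeq_le_sqrt_pi_mul_exp {n : ℕ} (hn : n ≠ 0) :
    stirlingSeq n ≤ √π * exp (1 / (12 * n)) := by
  set g : ℕ → ℝ := fun m ↦ log (stirlingSeq (m + 1)) - 1 / (12 * (m + 1 : ℕ)) with hg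
  have hmono : Monotone g := monotone_nat_of_le_succ fun m ↦ by
    have hstep := log_stirlingSeq_sdiff_le (m + 1)
    simp only [hg]
    push_cast at hstep ⊢
    have htelescope : (1 : ℝ) / (12 * (m + 1) * (m + 1 + 1)) =
        1 / (12 * (m + 1)) - 1 / (12 * (m + 1 + 1)) := by
      field_simp
      ring
    linarith
  have hlim : Filter.Tendsto g Filter.atTop (nhds (log √π)) := by
    have hlog := (continuousAt_log (by positivity)).tendsto.comp
      (tendsto_stirlingSeq_sqrt_pi.comp (Filter.tendsto_add_atTop_nat 1))
    have h := hlog.sub ((tendsto_one_div_add_atTop_nhds_zero_nat (𝕜 := ℝ)).div_const 12)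
    rw [zero_div, sub_zero] at h
    exact h.congr fun m ↦ by simp only [hg, Function.comp]; push_cast; rw [div_div, mul_comm]
  obtain ⟨m, rfl⟩ : ∃ m, n = m + 1 := ⟨n - 1, by omega⟩
  have hle := hmono.ge_of_tendsto hlim m
  simp only [hg, sub_le_iff_le_add] at hle
  rw [← exp_le_exp, exp_log (stirlingSeq'_pos m), exp_add, exp_log (by positivity)] at hle
  simpa [mul_comm] using hle

theorem stirling_lt_factorial {n : ℕ} (hn : n ≠ 0) :
    √(2 * π * n) * (n / exp 1) ^ n < n ! := by
  have : √(2 * π * n) * (n / exp 1) ^ n = √π * (√(2 * n) * (n / exp 1) ^ n) := by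
    simp [sqrt_mul']
    ring
  rw [this, ← lt_div_iff₀ (by positivity)]
  exact sqrt_pi_lt_stirlingSeq hn

theorem factorial_le_stirling_mul_exp {n : ℕ} (hn : n ≠ 0) :
    (n ! : ℝ) ≤ √(2 * π * n) * (n / exp 1) ^ n * exp (1 / (12 * n)) := by
  have : √(2 * π * n) * (n / exp 1) ^ n * exp (1 / (12 * n)) =
      √π * exp (1 / (12 * n)) * (√(2 * n) * (n / exp 1) ^ n) := by
    simp [sqrt_mul']
    ring
  rw [this, ← div_le_iff₀ (by positivity)]
  exact stirlingSeq_le_sqrt_pi_mul_exp hn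

end Stirling

theorem Nat.stirling_lt_choose_add {k b : ℕ} (hk : k ≠ 0) (hb : b ≠ 0) :
    exp (-(1 / (12 * k) + 1 / (12 * b))) / √(2 * π) * ((k + b) ^ (k + b) / (k ^ k * b ^ b)) *
      √((k + b) / (k * b)) < (k + b).choose k := by
  have hk' : (0 : ℝ) < k := by positivity
  have hb' : (0 : ℝ) < b := by positivity
  rw [Nat.cast_choose ℝ (Nat.le_add_right k b), Nat.add_sub_cancel_left]
  calc _ = √(2 * π * (k + b : ℕ)) * ((k + b : ℕ) / exp 1) ^ (k + b) /
        ((√(2 * π * k) * (k / exp 1) ^ k * exp (1 / (12 * k))) *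
          (√(2 * π * b) * (b / exp 1) ^ b * exp (1 / (12 * b)))) := by
        push_cast
        rw [sqrt_mul' (2 * π) hk'.le, sqrt_mul' (2 * π) hb'.le, sqrt_mul' (2 * π) (by positivity),
          sqrt_div' _ (by positivity), sqrt_mul hk'.le, exp_neg, exp_add, div_pow, div_pow, div_pow,
          pow_add (exp 1)]
        field_simp
    _ < _ := div_lt_div₀ (Stirling.stirling_lt_factorial (by omega))
        (mul_le_mul (Stirling.factorial_le_stirling_mul_exp hk)
          (Stirling.factorial_le_stirling_mul_exp hb) (by positivity) (by positivity))
        (by positivity) (by positivity)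

theorem exp_neg_mul_bernKL {k b : ℕ} (hk : k ≠ 0) (hb : b ≠ 0) {q : ℝ} (hq0 : 0 < q) (hq1 : q < 1) :
    exp (-(k + b) * bernKL (k / (k + b)) q) =
      q ^ k * (1 - q) ^ b * ((k + b) ^ (k + b) / (k ^ k * b ^ b)) := by
  have hk' : (0 : ℝ) < k := by positivity
  have hb' : (0 : ℝ) < b := by positivity
  have hq1' : 0 < 1 - q := sub_pos.mpr hq1
  have hcompl : 1 - k / (k + b : ℝ) = b / (k + b) := by
    field_simp
    ring
  have hexponent : -(k + b) * bernKL (k / (k + b)) q =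
      log ((q * (k + b) / k) ^ k) + log (((1 - q) * (k + b) / b) ^ b) := by
    rw [bernKL, hcompl, log_pow, log_pow,
      show q * (k + b) / k = (k / (k + b) / q)⁻¹ by field_simp,
      show (1 - q) * (k + b) / b = (b / (k + b) / (1 - q))⁻¹ by field_simp, log_inv, log_inv]
    field_simp
    ring
  rw [hexponent, exp_add, exp_log (by positivity), exp_log (by positivity), div_pow, div_pow,
    mul_pow, mul_pow, pow_add]
  field_simp

/-- Lower bound on binomial coefficients via Stirling's approximation: for
`1 ≤ k ≤ n − 1`,
`C(n,k) > (1/(e^{1/6}√(2π))) · 2ⁿ · exp(−n·D(k/n ‖ 1/2)) · √(n/(k(n−k)))`. -/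
theorem choose_lower_bound_kl (n k : ℕ) (hk1 : 1 ≤ k) (hk2 : k ≤ n - 1) :
    (n.choose k : ℝ) >
      1 / (Real.exp (1 / 6) * Real.sqrt (2 * π)) * 2 ^ n *
        Real.exp (-(n : ℝ) * bernKL ((k : ℝ) / n) (1 / 2)) *
        Real.sqrt ((n : ℝ) / ((k : ℝ) * ((n : ℝ) - k))) := by
  obtain ⟨b, rfl⟩ : ∃ b, n = k + b := ⟨n - k, by omega⟩
  have hk : k ≠ 0 := by omega
  have hb : b ≠ 0 := by omega
  have hentropy : 2 ^ (k + b) * exp (-((k + b : ℕ) : ℝ) * bernKL (k / (k + b : ℕ)) (1 / 2)) =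
      (k + b) ^ (k + b) / (k ^ k * b ^ b) := by
    push_cast
    rw [exp_neg_mul_bernKL hk hb (by norm_num) (by norm_num), pow_add,
      show (1 : ℝ) - 1 / 2 = 1 / 2 by norm_num]
    simp only [one_div, inv_pow]
    field_simp
  have herror : 1 / (12 * k) + 1 / (12 * b) ≤ (1 / 6 : ℝ) := by
    have : (1 : ℝ) ≤ k := by exact_mod_cast Nat.one_le_iff_ne_zero.mpr hk
    have : (1 : ℝ) ≤ b := by exact_mod_cast Nat.one_le_iff_ne_zero.mpr hb
    rw [div_add_div _ _ (by positivity) (by positivity), div_le_div_iff₀ (by positivity) (by norm_num)]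
    nlinarith
  calc _ = exp (-(1 / 6)) / √(2 * π) * ((k + b) ^ (k + b) / (k ^ k * b ^ b)) *
        √((k + b) / (k * b)) := by
        rw [mul_assoc _ (2 ^ _), hentropy, exp_neg]
        push_cast
        ring_nf
    _ ≤ exp (-(1 / (12 * k) + 1 / (12 * b))) / √(2 * π) *
        ((k + b) ^ (k + b) / (k ^ k * b ^ b)) * √((k + b) / (k * b)) := by gcongr
    _ < _ := Nat.stirling_lt_choose_add hk hb
end

section
/- Let Z⁽ⁿ⁾ be a symmetric random walk of length n ≥ 1. Then the conditional expectation of Z⁽ⁿ⁾ given the event {Z⁽ⁿ⁾ ≤ 0} satisfies E[Z⁽ⁿ⁾ | Z⁽ⁿ⁾ ≤ 0] ≥ −√n. -/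
open MeasureTheory ProbabilityTheory Real

/-!
The walk `Z` is symmetric: each `Yₜ` has the same law as `-Yₜ`, hence by independence `Z` has
the same law as `-Z`. Symmetry gives `E Z = 0` and `P(Z ≤ 0) ≥ 1/2`, and the identity
`Z·1{Z ≤ 0} = (Z - |Z|)/2` gives `E[Z; Z ≤ 0] = -E|Z|/2`. Finally
`E|Z| ≤ √(E Z²) = √(Var Z) = √n`, the steps being independent with variance one, so
`E[Z | Z ≤ 0] ≥ -(√n/2)/(1/2)`.
-/

namespace MeasureTheory

variable {Ω : Type*} [MeasurableSpace Ω] {μ : Measure Ω}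

lemma measure_preimage_inter_setOf_eq (f : Ω → ℝ) (s : Set ℝ) (a : ℝ) :
    μ (f ⁻¹' s ∩ {ω | f ω = a}) = s.indicator (fun _ => μ {ω | f ω = a}) a := by
  by_cases ha : a ∈ s
  · rw [Set.indicator_of_mem ha]
    congr 1
    exact Set.inter_eq_right.2 fun ω (hω : f ω = a) => show f ω ∈ s from hω ▸ ha
  · have h : Disjoint (f ⁻¹' s) {ω | f ω = a} :=
      Set.disjoint_left.2 fun ω hs (hω : f ω = a) => ha (hω ▸ hs)
    rw [Set.indicator_of_notMem ha, Set.disjoint_iff_inter_eq_empty.1 h, measure_empty]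

end MeasureTheory

namespace ProbabilityTheory

variable {Ω : Type*} [MeasurableSpace Ω] {μ : Measure Ω}

def IsRademacher (f : Ω → ℝ) (μ : Measure Ω) : Prop :=
  μ {ω | f ω = 1} = 1 / 2 ∧ μ {ω | f ω = -1} = 1 / 2

lemma IdentDistrib.integral_eq_zero_of_neg {X : Ω → ℝ} (h : IdentDistrib X (-X) μ μ) :
    μ[X] = 0 := by
  have := h.integral_eq
  rw [Pi.neg_def, integral_neg] at this
  linarith

namespace IsRademacher

variable {f : Ω → ℝ}

lemma ae_eq_one_or_neg_one [IsProbabilityMeasure μ] (hf : Measurable f) (h : IsRademacher f μ) :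
    ∀ᵐ ω ∂μ, f ω = 1 ∨ f ω = -1 := by
  change μ ({ω | f ω = 1} ∪ {ω | f ω = -1})ᶜ = 0
  have hm1 : MeasurableSet {ω | f ω = 1} := hf (measurableSet_singleton 1)
  have hm2 : MeasurableSet {ω | f ω = -1} := hf (measurableSet_singleton (-1))
  have hdisj : Disjoint {ω | f ω = 1} {ω | f ω = -1} :=
    Set.disjoint_left.2 fun ω (h1 : f ω = 1) (h2 : f ω = -1) => by linarith
  rw [measure_compl (hm1.union hm2) (measure_ne_top _ _), measure_union hdisj hm2, h.1, h.2,
    ENNReal.add_halves, measure_univ, tsub_self]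

lemma measure_preimage [IsProbabilityMeasure μ] (hf : Measurable f) (h : IsRademacher f μ)
    {s : Set ℝ} (hs : MeasurableSet s) :
    μ (f ⁻¹' s) = s.indicator (fun _ => 1 / 2) 1 + s.indicator (fun _ => 1 / 2) (-1) := by
  have hdisj : Disjoint {ω | f ω = 1} {ω | f ω = -1} :=
    Set.disjoint_left.2 fun ω (h1 : f ω = 1) (h2 : f ω = -1) => by linarith
  have hcover : μ ({ω | f ω = 1} ∪ {ω | f ω = -1})ᶜ = 0 := h.ae_eq_one_or_neg_one hf
  rw [← measure_inter_conull hcover, Set.inter_union_distrib_left,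
    measure_union (hdisj.mono Set.inter_subset_right Set.inter_subset_right)
      ((hf hs).inter (hf (measurableSet_singleton (-1)))),
    measure_preimage_inter_setOf_eq, measure_preimage_inter_setOf_eq, h.1, h.2]

lemma identDistrib_neg [IsProbabilityMeasure μ] (hf : Measurable f) (h : IsRademacher f μ) :
    IdentDistrib f (-f) μ μ where
  aemeasurable_fst := hf.aemeasurable
  aemeasurable_snd := hf.neg.aemeasurable
  map_eq := by
    ext s hs
    rw [Measure.map_apply hf hs, Measure.map_apply hf.neg hs, h.measure_preimage hf hs,
      show (-f) ⁻¹' s = f ⁻¹' (Neg.neg ⁻¹' s) from rfl,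
      h.measure_preimage hf (hs.preimage measurable_neg)]
    have hneg (x : ℝ) : (Neg.neg ⁻¹' s).indicator (fun _ => (1 / 2 : ENNReal)) x =
        s.indicator (fun _ => 1 / 2) (-x) :=
      Set.indicator_comp_right (g := fun _ => (1 / 2 : ENNReal)) Neg.neg
    rw [hneg, hneg, neg_neg, add_comm]

lemma variance_eq_one [IsProbabilityMeasure μ] (hf : Measurable f) (h : IsRademacher f μ) :
    Var[f; μ] = 1 := by
  have hsq : (fun ω => f ω ^ 2) =ᵐ[μ] fun _ => 1 := by
    filter_upwards [h.ae_eq_one_or_neg_one hf] with ω hω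
    rcases hω with hω | hω <;> simp [hω]
  rw [variance_of_integral_eq_zero hf.aemeasurable (h.identDistrib_neg hf).integral_eq_zero_of_neg,
    integral_congr_ae hsq, integral_const, probReal_univ, smul_eq_mul, mul_one]

lemma memLp [IsProbabilityMeasure μ] (hf : Measurable f) (h : IsRademacher f μ) (p : ENNReal) :
    MemLp f p μ :=
  MemLp.of_bound hf.aestronglyMeasurable 1 <| by
    filter_upwards [h.ae_eq_one_or_neg_one hf] with ω hω
    rcases hω with hω | hω <;> simp [hω]

end IsRademacher

section Symmetric

variable {X : Ω → ℝ}

lemma IdentDistrib.half_le_measureReal_nonpos [IsProbabilityMeasure μ]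
    (h : IdentDistrib X (-X) μ μ) : 1 / 2 ≤ μ.real {ω | X ω ≤ 0} := by
  have hneg : μ.real {ω | X ω ≤ 0} = μ.real {ω | 0 ≤ X ω} := by
    have := h.measure_mem_eq (measurableSet_Iic (a := (0 : ℝ)))
    simp only [Set.preimage, Set.mem_Iic, Pi.neg_apply, neg_nonpos] at this
    simp only [measureReal_def, this]
  have hcover : μ.real Set.univ ≤ μ.real {ω | X ω ≤ 0} + μ.real {ω | 0 ≤ X ω} := by
    rw [← Set.ofPred_or.trans (Set.eq_univ_of_forall fun ω => le_total (X ω) 0)]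
    exact measureReal_union_le _ _
  rw [probReal_univ, ← hneg] at hcover
  linarith

lemma sq_integral_abs_le_integral_sq [IsProbabilityMeasure μ] (hX : MemLp X 2 μ) :
    (∫ ω, |X ω| ∂μ) ^ 2 ≤ ∫ ω, X ω ^ 2 ∂μ := by
  have := variance_nonneg (fun ω => |X ω|) μ
  rw [variance_eq_sub (X := fun ω => |X ω|) hX.abs] at this
  simpa only [Pi.pow_apply, sq_abs, sub_nonneg] using this

lemma two_mul_setIntegral_setOf_nonpos (hX : Integrable X μ) :
    2 * ∫ ω in {ω | X ω ≤ 0}, X ω ∂μ = μ[X] - ∫ ω, |X ω| ∂μ := by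
  have hA : NullMeasurableSet {ω | X ω ≤ 0} μ :=
    nullMeasurableSet_le hX.aemeasurable aemeasurable_const
  have hind (ω : Ω) : {ω | X ω ≤ 0}.indicator X ω = (X ω - |X ω|) / 2 := by
    by_cases hω : X ω ≤ 0
    · rw [Set.indicator_of_mem (s := {ω | X ω ≤ 0}) hω, abs_of_nonpos hω]; ring
    · rw [Set.indicator_of_notMem (s := {ω | X ω ≤ 0}) hω, abs_of_pos (not_le.1 hω)]; ring
  rw [← integral_indicator₀ hA, funext hind, integral_div, integral_sub hX hX.abs]
  ring

lemma IdentDistrib.neg_sqrt_variance_le_setIntegral_nonpos_div [IsProbabilityMeasure μ]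
    (h : IdentDistrib X (-X) μ μ) (hX : MemLp X 2 μ) :
    -√Var[X; μ] ≤ (∫ ω in {ω | X ω ≤ 0}, X ω ∂μ) / μ.real {ω | X ω ≤ 0} := by
  have hmean := h.integral_eq_zero_of_neg
  have hhalf := h.half_le_measureReal_nonpos
  have habs : ∫ ω, |X ω| ∂μ ≤ √Var[X; μ] := by
    rw [Real.le_sqrt (integral_nonneg fun _ => abs_nonneg _) (variance_nonneg _ _),
      variance_of_integral_eq_zero hX.aemeasurable hmean]
    exact sq_integral_abs_le_integral_sq hX
  have hset := two_mul_setIntegral_setOf_nonpos (hX.integrable one_le_two)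
  rw [le_div_iff₀ (by linarith)]
  nlinarith [Real.sqrt_nonneg Var[X; μ]]

end Symmetric

lemma iIndepFun.identDistrib_sum_neg {ι : Type*} [Fintype ι] {Y : ι → Ω → ℝ}
    (hindep : iIndepFun Y μ) (hY : ∀ i, IdentDistrib (Y i) (-Y i) μ μ) :
    IdentDistrib (fun ω => ∑ i, Y i ω) (fun ω => -∑ i, Y i ω) μ μ := by
  have hvec := IdentDistrib.pi hY hindep (hindep.comp (fun _ => Neg.neg) fun _ => measurable_neg)
  simpa [Function.comp_def] using hvec.comp (u := fun y : ι → ℝ => ∑ i, y i) (by fun_prop)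

lemma iIndepFun.variance_sum_of_isRademacher {ι : Type*} [Fintype ι] {Y : ι → Ω → ℝ}
    [IsProbabilityMeasure μ] (hindep : iIndepFun Y μ) (hY : ∀ i, Measurable (Y i))
    (hrad : ∀ i, IsRademacher (Y i) μ) :
    Var[fun ω => ∑ i, Y i ω; μ] = Fintype.card ι := by
  rw [← Finset.sum_fn, IndepFun.variance_sum (fun i _ => (hrad i).memLp (hY i) 2)
    fun i _ j _ hij => hindep.indepFun hij]
  simp [fun i => (hrad i).variance_eq_one (hY i)]

end ProbabilityTheory

theorem random_walk_conditional_expectation_lower_bound_general {Ω : Type*} [MeasurableSpace Ω]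
    (μ : Measure Ω) [IsProbabilityMeasure μ]
    (n : ℕ)
    (Y : Fin n → Ω → ℝ) (hY : ∀ t, Measurable (Y t))
    (hindep : iIndepFun Y μ)
    (hrad : ∀ t, μ {ω | Y t ω = 1} = 1 / 2 ∧ μ {ω | Y t ω = -1} = 1 / 2) :
    (∫ ω in {ω | ∑ t, Y t ω ≤ 0}, (∑ t, Y t ω) ∂μ) /
        (μ {ω | ∑ t, Y t ω ≤ 0}).toReal ≥ -Real.sqrt n := by
  have hsymm := hindep.identDistrib_sum_neg fun t => IsRademacher.identDistrib_neg (hY t) (hrad t)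
  have hL2 : MemLp (fun ω => ∑ t, Y t ω) 2 μ :=
    memLp_finsetSum _ fun t _ => IsRademacher.memLp (hY t) (hrad t) 2
  have hbound := hsymm.neg_sqrt_variance_le_setIntegral_nonpos_div hL2
  rwa [hindep.variance_sum_of_isRademacher hY hrad, Fintype.card_fin] at hbound

/-- The conditional expectation of a symmetric random walk of length `n ≥ 1`
(a sum `Z⁽ⁿ⁾ = ∑ₜ Yₜ` of `n` i.i.d. Rademacher variables) given the event
`{Z⁽ⁿ⁾ ≤ 0}` satisfies `E[Z⁽ⁿ⁾ | Z⁽ⁿ⁾ ≤ 0] ≥ −√n`. -/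
theorem random_walk_conditional_expectation_lower_bound {Ω : Type*} [MeasurableSpace Ω]
    (μ : Measure Ω) [IsProbabilityMeasure μ]
    (n : ℕ) (hn : 1 ≤ n)
    (Y : Fin n → Ω → ℝ) (hY : ∀ t, Measurable (Y t))
    (hindep : iIndepFun Y μ)
    (hrad : ∀ t, μ {ω | Y t ω = 1} = 1 / 2 ∧ μ {ω | Y t ω = -1} = 1 / 2) :
    (∫ ω in {ω | ∑ t, Y t ω ≤ 0}, (∑ t, Y t ω) ∂μ) /
        (μ {ω | ∑ t, Y t ω ≤ 0}).toReal ≥ -Real.sqrt n :=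
  random_walk_conditional_expectation_lower_bound_general μ n Y hY hindep hrad
end
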